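/- arXiv:1907.10369 — 2 statements merged into one kernel-verified Lean document; each statement's English description precedes it below -/
import Mathlib

section
/- Let Q be a Borel probability measure on ℝ^ℕ that is stationary under the shift map T((x₁,x₂,…)) = (x₂,x₃,…), let Y be a real-valued random variable on (ℝ^ℕ, B(ℝ^ℕ), Q) and λ ∈ (0,1). If Q_λ is a version of the conditional λth quantile π_λ(Y | I_Q) of Y with respect to the σ-field I_Q of almost shift-invariant sets, then there exists a random variable R_λ which is a version of the conditional λth quantile π_λ(Y | Ĩ) of Y with respect to the σ-field Ĩ of strictly shift-invariant Borel sets, and which satisfies Q_λ = R_λ Q-almost surely. -/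
open MeasureTheory Filter Set

noncomputable section

/-- The shift map `T((x₁,x₂,…)) = (x₂,x₃,…)` on `ℝ^ℕ`. -/
def shift (x : ℕ → ℝ) : ℕ → ℝ := fun n => x (n + 1)

/-- The σ-field `Ĩ` of strictly shift-invariant Borel subsets of `ℝ^ℕ`. -/
def invSigma : MeasurableSpace (ℕ → ℝ) where
  MeasurableSet' B := MeasurableSet B ∧ shift ⁻¹' B = B
  measurableSet_empty := ⟨MeasurableSet.empty, Set.preimage_empty⟩
  measurableSet_compl B hB := ⟨hB.1.compl, by rw [Set.preimage_compl, hB.2]⟩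
  measurableSet_iUnion f hf :=
    ⟨MeasurableSet.iUnion fun i => (hf i).1, by
      rw [Set.preimage_iUnion]
      exact Set.iUnion_congr fun i => (hf i).2⟩

/-- The σ-field `I_Q` of almost shift-invariant Borel subsets of `ℝ^ℕ`,
for a (stationary) probability measure `Q`. -/
def aeInvSigma (Q : Measure (ℕ → ℝ)) : MeasurableSpace (ℕ → ℝ) where
  MeasurableSet' B := MeasurableSet B ∧ Q ((B \ shift ⁻¹' B) ∪ (shift ⁻¹' B \ B)) = 0
  measurableSet_empty := ⟨MeasurableSet.empty, by simp⟩
  measurableSet_compl B hB := ⟨hB.1.compl, by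
    rw [Set.preimage_compl, compl_sdiff_compl, compl_sdiff_compl, Set.union_comm]
    exact hB.2⟩
  measurableSet_iUnion f hf := by
    refine ⟨MeasurableSet.iUnion fun i => (hf i).1, ?_⟩
    refine measure_mono_null ?_ (measure_iUnion_null fun i => (hf i).2)
    intro x hx
    simp only [Set.mem_union, Set.mem_diff, Set.mem_iUnion, Set.mem_preimage] at hx ⊢
    rcases hx with ⟨⟨i, hxi⟩, hnx⟩ | ⟨⟨i, hxi⟩, hnx⟩
    · exact ⟨i, Or.inl ⟨hxi, fun h => hnx ⟨i, h⟩⟩⟩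
    · exact ⟨i, Or.inr ⟨hxi, fun h => hnx ⟨i, h⟩⟩⟩

/-- A sequence `X = (X₁, X₂, …)` (indexed here from 0) of real-valued random variables is
strictly stationary: each `Xₙ` is measurable and `(X₁,X₂,…)` and `(X₂,X₃,…)` have the same
distribution as `ℝ^ℕ`-valued random elements. -/
def IsStrictStationary {Ω : Type*} [MeasurableSpace Ω] (P : Measure Ω) (X : ℕ → Ω → ℝ) : Prop :=
  (∀ n, Measurable (X n)) ∧
    Measure.map (fun ω => fun n => X (n + 1) ω) P = Measure.map (fun ω => fun n => X n ω) P

/-- The σ-field `I^X` of sets invariant with respect to the sequence `X`. -/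
def seqInvSigma {Ω : Type*} [MeasurableSpace Ω] (X : ℕ → Ω → ℝ) : MeasurableSpace Ω where
  MeasurableSet' A := ∃ B : Set (ℕ → ℝ), MeasurableSet B ∧
    ∀ i : ℕ, A = (fun ω => fun n => X (n + i) ω) ⁻¹' B
  measurableSet_empty := ⟨∅, MeasurableSet.empty, fun i => rfl⟩
  measurableSet_compl A hA := by
    obtain ⟨B, hB, hAB⟩ := hA
    exact ⟨Bᶜ, hB.compl, fun i => by rw [Set.preimage_compl, ← hAB i]⟩
  measurableSet_iUnion f hf := by
    choose B hB hAB using hf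
    refine ⟨⋃ i, B i, MeasurableSet.iUnion hB, fun j => ?_⟩
    rw [Set.preimage_iUnion]
    exact Set.iUnion_congr fun i => hAB i j

/-- Conditional probability of the event `s` given the σ-field `G`, defined as the conditional
expectation of the indicator of `s`. -/
def condProb {α : Type*} [mα : MeasurableSpace α] (μ : Measure α) (G : MeasurableSpace α)
    (s : Set α) : α → ℝ :=
  @MeasureTheory.condExp α ℝ G mα _ _ μ (s.indicator fun _ => (1 : ℝ))

/-- `q` is a (version of the) conditional `l`-th quantile of `Z` with respect to the
sub-σ-field `G`: `q` is `G`-measurable, `P(Z ≥ q | G) ≥ 1 - l` a.s. and `P(Z ≤ q | G) ≥ l` a.s. -/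
def IsCondQuantile {α : Type*} [mα : MeasurableSpace α] (μ : Measure α) (G : MeasurableSpace α)
    (Z q : α → ℝ) (l : ℝ) : Prop :=
  Measurable[G] q ∧
    (∀ᵐ x ∂μ, 1 - l ≤ @condProb α mα μ G {y | q y ≤ Z y} x) ∧
    (∀ᵐ x ∂μ, l ≤ @condProb α mα μ G {y | Z y ≤ q y} x)

/-- The conditional `l`-th quantile of `Z` given `G` is unique: any two versions agree a.s. -/
def CondQuantileUnique {α : Type*} [mα : MeasurableSpace α] (μ : Measure α) (G : MeasurableSpace α)
    (Z : α → ℝ) (l : ℝ) : Prop :=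
  ∀ q₁ q₂, @IsCondQuantile α mα μ G Z q₁ l → @IsCondQuantile α mα μ G Z q₂ l → q₁ =ᵐ[μ] q₂

/-- The `k`-th order statistic (k-th smallest value, `1 ≤ k ≤ n`) of the sample
`z 0, …, z (n-1)`. -/
def orderStat (k n : ℕ) (z : ℕ → ℝ) : ℝ :=
  (((List.ofFn fun i : Fin n => z i).insertionSort (· ≤ ·)).getD (k - 1) 0)

end

/-! Almost invariance of a set `B` means `T⁻¹B =ᵐ B`, so every `I_Q`-measurable `q` satisfies
`q ∘ T =ᵐ q`, and `R := limsup (q ∘ T^[n])` is a strictly invariant version of `q`. Likewise every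
almost invariant set is a.e. equal to a strictly invariant one, so conditional expectations (and
hence conditional probabilities) given `Ĩ` and given `I_Q` agree a.e.; the two quantile
inequalities for `q` given `I_Q` then transfer to `R` given `Ĩ`. -/

section Invariance

variable {α : Type*} [MeasurableSpace α] {μ : Measure α} {f : α → α}

theorem Measurable.comp_ae_eq_of_forall_preimage_ae_eq {m : MeasurableSpace α} {g : α → ℝ}
    (hg : Measurable[m] g) (hm : ∀ s, MeasurableSet[m] s → f ⁻¹' s =ᵐ[μ] s) :
    g ∘ f =ᵐ[μ] g := by
  have hsublevel : ∀ᵐ x ∂μ, ∀ r : ℚ, g (f x) ≤ r ↔ g x ≤ r := by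
    rw [ae_all_iff]
    exact fun r => eventuallyEq_set.mp (hm _ (hg measurableSet_Iic))
  filter_upwards [hsublevel] with x hx
  exact le_antisymm (le_of_forall_lt_rat_imp_le fun r hr => (hx r).mpr hr.le)
    (le_of_forall_lt_rat_imp_le fun r hr => (hx r).mp hr.le)

theorem MeasureTheory.Measure.QuasiMeasurePreserving.iterate_comp_ae_eq
    (hf : Measure.QuasiMeasurePreserving f μ μ) {β : Type*} {g : α → β} (hgf : g ∘ f =ᵐ[μ] g)
    (n : ℕ) : g ∘ f^[n] =ᵐ[μ] g := by
  induction n with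
  | zero => rfl
  | succ n ih =>
    rw [Function.iterate_succ, ← Function.comp_assoc]
    exact (hf.ae_eq_comp ih).trans hgf

/-- The witness is `x ↦ limsup (g (f^[n] x))`, which is `f`-invariant by construction. -/
theorem MeasureTheory.Measure.QuasiMeasurePreserving.exists_measurable_invariants_ae_eq
    (hf : Measure.QuasiMeasurePreserving f μ μ) {g : α → ℝ} (hg : Measurable g)
    (hgf : g ∘ f =ᵐ[μ] g) :
    ∃ R : α → ℝ, Measurable[MeasurableSpace.invariants f] R ∧ g =ᵐ[μ] R := by
  set R : α → ℝ := fun x => limsup (fun n => g (f^[n] x)) atTop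
  have hR_comp : R ∘ f = R := funext fun x => by
    simp only [R, Function.comp_apply, ← Function.iterate_succ_apply]
    exact limsup_nat_add (fun n => g (f^[n] x)) 1
  have hR : Measurable R := Measurable.limsup fun n => hg.comp (hf.measurable.iterate n)
  refine ⟨R, MeasurableSpace.measurable_invariants_dom.mpr
    ⟨hR, fun s _ => by rw [hR_comp]⟩, ?_⟩
  have hconst : ∀ᵐ x ∂μ, ∀ n, g (f^[n] x) = g x := ae_all_iff.mpr (hf.iterate_comp_ae_eq hgf)
  filter_upwards [hconst] with x hx
  simp only [R, hx, limsup_const]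

end Invariance

section CondExp

variable {α E : Type*} [NormedAddCommGroup E] [NormedSpace ℝ E] [CompleteSpace E]
  {m₁ m₂ mα : MeasurableSpace α} {μ : Measure α}

theorem condExp_ae_eq_condExp_of_forall_exists_ae_eq (hm₁₂ : m₁ ≤ m₂) (hm₂ : m₂ ≤ mα)
    [SigmaFinite (μ.trim (hm₁₂.trans hm₂))]
    (h : ∀ s, MeasurableSet[m₂] s → ∃ t, MeasurableSet[m₁] t ∧ t =ᵐ[μ] s) (g : α → E) :
    μ[g|m₁] =ᵐ[μ] μ[g|m₂] := by
  by_cases hg : Integrable g μ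
  swap
  · simp only [condExp_of_not_integrable hg, EventuallyEq.rfl]
  have : SigmaFinite (μ.trim hm₂) := sigmaFiniteTrim_mono hm₂ hm₁₂
  refine ae_eq_condExp_of_forall_setIntegral_eq hm₂ hg
    (fun _ _ _ => integrable_condExp.integrableOn) (fun s hs _ => ?_)
    (stronglyMeasurable_condExp.mono hm₁₂).aestronglyMeasurable
  obtain ⟨t, ht, hts⟩ := h s hs
  rw [← setIntegral_congr_set hts, setIntegral_condExp (hm₁₂.trans hm₂) hg ht,
    setIntegral_congr_set hts]

end CondExp

section Quantile

variable {α : Type*} {m₁ m₂ : MeasurableSpace α} [MeasurableSpace α] {μ : Measure α}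

theorem condProb_congr_ae {s t : Set α} (hst : s =ᵐ[μ] t) :
    condProb μ m₁ s =ᵐ[μ] condProb μ m₁ t :=
  condExp_congr_ae (indicator_ae_eq_of_ae_eq_set hst)

theorem IsCondQuantile.of_ae_eq_of_condProb_ae_eq {Z q R : α → ℝ}
    {l : ℝ} (hq : IsCondQuantile μ m₂ Z q l) (hR : Measurable[m₁] R) (hqR : q =ᵐ[μ] R)
    (hcond : ∀ s, condProb μ m₁ s =ᵐ[μ] condProb μ m₂ s) :
    IsCondQuantile μ m₁ Z R l := by
  have hlower : {y | R y ≤ Z y} =ᵐ[μ] {y | q y ≤ Z y} :=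
    eventuallyEq_set.mpr (hqR.mono fun y hy => by rw [mem_ofPred_eq, mem_ofPred_eq, hy])
  have hupper : {y | Z y ≤ R y} =ᵐ[μ] {y | Z y ≤ q y} :=
    eventuallyEq_set.mpr (hqR.mono fun y hy => by rw [mem_ofPred_eq, mem_ofPred_eq, hy])
  refine ⟨hR, ?_, ?_⟩
  · filter_upwards [hq.2.1, condProb_congr_ae (m₁ := m₁) hlower, hcond {y | q y ≤ Z y}]
      with x hx hRq hm₁₂
    rwa [hRq, hm₁₂]
  · filter_upwards [hq.2.2, condProb_congr_ae (m₁ := m₁) hupper, hcond {y | Z y ≤ q y}]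
      with x hx hRq hm₁₂
    rwa [hRq, hm₁₂]

end Quantile

theorem measurable_shift : Measurable shift :=
  measurable_pi_lambda _ fun n => measurable_pi_apply (n + 1)

theorem quasiMeasurePreserving_shift {Q : Measure (ℕ → ℝ)} (hQ : Measure.map shift Q = Q) :
    Measure.QuasiMeasurePreserving shift Q Q :=
  (MeasurePreserving.mk measurable_shift hQ).quasiMeasurePreserving

theorem invSigma_eq_invariants : invSigma = MeasurableSpace.invariants shift := rfl

theorem aeInvSigma_le (Q : Measure (ℕ → ℝ)) : aeInvSigma Q ≤ MeasurableSpace.pi :=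
  fun _ hs => hs.1

theorem invSigma_le_aeInvSigma (Q : Measure (ℕ → ℝ)) : invSigma ≤ aeInvSigma Q :=
  fun s hs => ⟨hs.1, by simp [hs.2]⟩

theorem preimage_shift_ae_eq_of_measurableSet_aeInvSigma {Q : Measure (ℕ → ℝ)} {s : Set (ℕ → ℝ)}
    (hs : MeasurableSet[aeInvSigma Q] s) : shift ⁻¹' s =ᵐ[Q] s :=
  (measure_symmDiff_eq_zero_iff.mp hs.2).symm

theorem exists_measurableSet_invSigma_ae_eq {Q : Measure (ℕ → ℝ)} (hQ : Measure.map shift Q = Q)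
    {s : Set (ℕ → ℝ)} (hs : MeasurableSet[aeInvSigma Q] s) :
    ∃ t, MeasurableSet[invSigma] t ∧ t =ᵐ[Q] s := by
  obtain ⟨t, ht, hts, ht_inv⟩ := (quasiMeasurePreserving_shift hQ).exists_preimage_eq_of_preimage_ae
    hs.1.nullMeasurableSet (preimage_shift_ae_eq_of_measurableSet_aeInvSigma hs)
  exact ⟨t, invSigma_eq_invariants ▸ ⟨ht, ht_inv⟩, hts⟩

theorem exists_isCondQuantile_invSigma_of_isCondQuantile_aeInvSigma_general
    (Q : Measure (ℕ → ℝ)) [IsProbabilityMeasure Q]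
    (hQ : Measure.map shift Q = Q)
    (Y : (ℕ → ℝ) → ℝ)
    (l : ℝ)
    (q : (ℕ → ℝ) → ℝ) (hq : IsCondQuantile Q (aeInvSigma Q) Y q l) :
    ∃ R : (ℕ → ℝ) → ℝ, IsCondQuantile Q invSigma Y R l ∧ q =ᵐ[Q] R := by
  have hq_comp : q ∘ shift =ᵐ[Q] q := hq.1.comp_ae_eq_of_forall_preimage_ae_eq
    fun _ => preimage_shift_ae_eq_of_measurableSet_aeInvSigma
  obtain ⟨R, hR, hqR⟩ := (quasiMeasurePreserving_shift hQ).exists_measurable_invariants_ae_eq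
    (hq.1.mono (aeInvSigma_le Q) le_rfl) hq_comp
  rw [← invSigma_eq_invariants] at hR
  refine ⟨R, hq.of_ae_eq_of_condProb_ae_eq hR hqR fun s => ?_, hqR⟩
  exact condExp_ae_eq_condExp_of_forall_exists_ae_eq (invSigma_le_aeInvSigma Q) (aeInvSigma_le Q)
    (fun _ => exists_measurableSet_invSigma_ae_eq hQ) _

/-- If `q` is a version of the conditional `λ`-th quantile of `Y` with respect
to `I_Q`, then there exists a version `R` of the conditional `λ`-th quantile of `Y` with respect
to `Ĩ` such that `q = R` `Q`-almost surely. -/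
theorem exists_isCondQuantile_invSigma_of_isCondQuantile_aeInvSigma
    (Q : Measure (ℕ → ℝ)) [IsProbabilityMeasure Q]
    (hQ : Measure.map shift Q = Q)
    (Y : (ℕ → ℝ) → ℝ) (hY : Measurable Y)
    (l : ℝ) (hl : l ∈ Set.Ioo (0 : ℝ) 1)
    (q : (ℕ → ℝ) → ℝ) (hq : IsCondQuantile Q (aeInvSigma Q) Y q l) :
    ∃ R : (ℕ → ℝ) → ℝ, IsCondQuantile Q invSigma Y R l ∧ q =ᵐ[Q] R :=
  exists_isCondQuantile_invSigma_of_isCondQuantile_aeInvSigma_general Q hQ Y l q hq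
end

section
/- Let X be a real-valued random variable on a probability space (Ω, F, P), let G ⊆ F be a sub-σ-field, and let λ ∈ (0,1). Then there exists at least one conditional λth quantile of X with respect to G, i.e. a random variable Q_λ such that Q_λ is G-measurable and P(X ≥ Q_λ | G) ≥ 1−λ and P(X ≤ Q_λ | G) ≥ λ almost surely. -/
open MeasureTheory Filter Set

/-!
Take for `Q_λ(ω)` the lower `λ`-quantile `inf {x | λ ≤ F_ω(x)}` of the regular conditional
distribution of `Z` given `G` at `ω`. It is `G`-measurable because the conditional distribution
is a measurable kernel. For every probability measure on `ℝ` the lower quantile `q` satisfies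
`F(q) ≥ λ` (right continuity of `F`) and `F(q-) ≤ λ`; and the conditional probabilities of
`{Z ≥ Q_λ}` and `{Z ≤ Q_λ}` are, almost surely, the masses the conditional distribution gives to
`[Q_λ, ∞)` and `(-∞, Q_λ]`.
-/

open ProbabilityTheory Function

namespace ProbabilityTheory

noncomputable def quantile (μ : Measure ℝ) (l : ℝ) : ℝ := sInf {x | l ≤ cdf μ x}

section Quantile

variable (μ : Measure ℝ) {l : ℝ}

lemma bddBelow_setOf_le_cdf (hl : 0 < l) : BddBelow {x | l ≤ cdf μ x} := by
  obtain ⟨x₀, hx₀⟩ :=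
    ((tendsto_cdf_atBot μ).eventually (eventually_lt_nhds hl)).exists_forall_of_atBot
  refine ⟨x₀, fun x hx => ?_⟩
  by_contra! hlt
  exact (hx₀ x hlt.le).not_ge hx

lemma nonempty_setOf_le_cdf (hl : l < 1) : {x | l ≤ cdf μ x}.Nonempty :=
  ((tendsto_cdf_atTop μ).eventually (eventually_ge_nhds hl)).exists

variable {μ}

lemma quantile_lt_iff (hl₀ : 0 < l) (hl₁ : l < 1) {c : ℝ} :
    quantile μ l < c ↔ ∃ r : ℚ, (r : ℝ) < c ∧ l ≤ cdf μ r := by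
  rw [quantile, csInf_lt_iff (bddBelow_setOf_le_cdf μ hl₀) (nonempty_setOf_le_cdf μ hl₁)]
  constructor
  · rintro ⟨x, hx, hxc⟩
    obtain ⟨r, hxr, hrc⟩ := exists_rat_btwn hxc
    exact ⟨r, hrc, hx.trans (monotone_cdf μ hxr.le)⟩
  · rintro ⟨r, hrc, hr⟩
    exact ⟨r, hr, hrc⟩

lemma cdf_lt_of_lt_quantile (hl₀ : 0 < l) {x : ℝ} (hx : x < quantile μ l) : cdf μ x < l :=
  not_le.1 fun h => hx.not_ge (csInf_le (bddBelow_setOf_le_cdf μ hl₀) h)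

/-- By right continuity of the cdf, the infimum defining the quantile is attained. -/
lemma le_cdf_quantile (hl₀ : 0 < l) (hl₁ : l < 1) : l ≤ cdf μ (quantile μ l) := by
  refine ge_of_tendsto
    (((cdf μ).right_continuous _).mono_left (nhdsWithin_mono _ Ioi_subset_Ici_self)) ?_
  filter_upwards [self_mem_nhdsWithin] with x hx
  obtain ⟨r, hrx, hr⟩ := (quantile_lt_iff hl₀ hl₁).1 hx
  exact hr.trans (monotone_cdf μ hrx.le)

lemma leftLim_cdf_quantile_le (hl₀ : 0 < l) : leftLim (cdf μ) (quantile μ l) ≤ l := by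
  refine le_of_tendsto ((monotone_cdf μ).tendsto_leftLim _) ?_
  filter_upwards [self_mem_nhdsWithin] with x hx
  exact (cdf_lt_of_lt_quantile hl₀ hx).le

variable [IsProbabilityMeasure μ]

lemma le_measureReal_Iic_quantile (hl₀ : 0 < l) (hl₁ : l < 1) :
    l ≤ μ.real (Iic (quantile μ l)) :=
  cdf_eq_real μ _ ▸ le_cdf_quantile hl₀ hl₁

lemma measureReal_Iio_quantile_le (hl₀ : 0 < l) : μ.real (Iio (quantile μ l)) ≤ l := by
  have h := (cdf μ).measure_Iio (tendsto_cdf_atBot μ) (quantile μ l)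
  rw [measure_cdf, sub_zero] at h
  rw [measureReal_def, h, ENNReal.toReal_ofReal']
  exact max_le (leftLim_cdf_quantile_le hl₀) hl₀.le

lemma one_sub_le_measureReal_Ici_quantile (hl₀ : 0 < l) :
    1 - l ≤ μ.real (Ici (quantile μ l)) := by
  rw [← compl_Iio, measureReal_compl measurableSet_Iio, probReal_univ]
  linarith [measureReal_Iio_quantile_le (μ := μ) hl₀]

end Quantile

lemma measurable_quantile {β : Type*} [MeasurableSpace β] (κ : Kernel β ℝ) [IsMarkovKernel κ]
    {l : ℝ} (hl₀ : 0 < l) (hl₁ : l < 1) : Measurable fun b => quantile (κ b) l := by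
  refine measurable_of_Iio fun c => ?_
  have : (fun b => quantile (κ b) l) ⁻¹' Iio c =
      ⋃ r : ℚ, ⋃ (_ : (r : ℝ) < c), {b | l ≤ cdf (κ b) r} := by
    ext b
    simp [quantile_lt_iff hl₀ hl₁]
  rw [this]
  refine .iUnion fun r => .iUnion fun _ => measurableSet_le measurable_const ?_
  simp_rw [cdf_eq_real, measureReal_def]
  exact (κ.measurable_coe measurableSet_Iic).ennreal_toReal

lemma condDistrib_prodMk_preimage_ae_eq_condExp {α β Ω : Type*} [MeasurableSpace Ω]
    [StandardBorelSpace Ω] [Nonempty Ω] {mα : MeasurableSpace α} {mβ : MeasurableSpace β}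
    {μ : Measure α} [IsFiniteMeasure μ] {X : α → β} {Y : α → Ω} (hX : Measurable X)
    (hY : Measurable Y) {s : Set (β × Ω)} (hs : MeasurableSet s) :
    (fun a => (condDistrib Y X μ (X a)).real (Prod.mk (X a) ⁻¹' s))
      =ᵐ[μ] μ⟦(fun a => (X a, Y a)) ⁻¹' s | mβ.comap X⟧ := by
  have hf : StronglyMeasurable (s.indicator fun _ => (1 : ℝ)) :=
    stronglyMeasurable_const.indicator hs
  have hf_int : Integrable (fun a => s.indicator (fun _ => (1 : ℝ)) (X a, Y a)) μ :=
    (integrable_const (1 : ℝ)).indicator (hs.preimage (hX.prodMk hY))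
  filter_upwards [condExp_prod_ae_eq_integral_condDistrib hX hY.aemeasurable hf hf_int] with a ha
  rw [← integral_indicator_one (measurable_prodMk_left hs)]
  exact ha.symm

theorem isCondQuantile_quantile_condDistrib {α β : Type*} {mα : MeasurableSpace α}
    {mβ : MeasurableSpace β} (μ : Measure α) [IsFiniteMeasure μ] {Z : α → ℝ} (hZ : Measurable Z)
    {X : α → β} (hX : Measurable X) {l : ℝ} (hl₀ : 0 < l) (hl₁ : l < 1) :
    IsCondQuantile μ (mβ.comap X) Z (fun a => quantile (condDistrib Z X μ (X a)) l) l := by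
  set g : β → ℝ := fun b => quantile (condDistrib Z X μ b) l
  have hg : Measurable g := measurable_quantile _ hl₀ hl₁
  refine ⟨hg.comp (comap_measurable X), ?_, ?_⟩
  · filter_upwards [condDistrib_prodMk_preimage_ae_eq_condExp hX hZ
      (measurableSet_le (hg.comp measurable_fst) measurable_snd)] with a ha
    exact (one_sub_le_measureReal_Ici_quantile hl₀).trans_eq ha
  · filter_upwards [condDistrib_prodMk_preimage_ae_eq_condExp hX hZ
      (measurableSet_le measurable_snd (hg.comp measurable_fst))] with a ha
    exact (le_measureReal_Iic_quantile hl₀ hl₁).trans_eq ha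

end ProbabilityTheory

/-- For every random variable `Z` on a probability space `(Ω, F, P)`, every
sub-σ-field `G ⊆ F` and every `λ ∈ (0,1)`, there exists at least one conditional `λ`-th
quantile of `Z` with respect to `G`. -/
theorem exists_isCondQuantile
    {Ω : Type*} [mΩ : MeasurableSpace Ω] (P : Measure Ω) [IsProbabilityMeasure P]
    (Z : Ω → ℝ) (hZ : Measurable Z)
    (G : MeasurableSpace Ω) (hG : G ≤ mΩ)
    (l : ℝ) (hl : l ∈ Set.Ioo (0 : ℝ) 1) :
    ∃ q : Ω → ℝ, @IsCondQuantile Ω mΩ P G Z q l := by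
  have h := isCondQuantile_quantile_condDistrib (mβ := G) P hZ (measurable_id'' hG) hl.1 hl.2
  rw [MeasurableSpace.comap_id] at h
  exact ⟨_, h⟩
end
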